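/- The derivation D := r²·s⁻²·∂_r + r·s⁻¹·∂_s of ℂ[r, s, s⁻¹] maps B into B, i.e. it restricts to a derivation of the coordinate ring of the ruled surface z³ = xy²; explicitly, D(rⁿsᵐ) = (n + m)·r^{n+1}s^{m−2}. (The exceptional derivation in part 3 of the Lemma on derivations of the ruled surface.) -/

import Mathlib

/-- The ring `ℂ[r, s, s⁻¹]` of polynomials in `r` that are Laurent polynomials
in `s`, realized as the monoid algebra of `ℕ × ℤ` over `ℂ`. -/
abbrev PolyLaurent : Type := AddMonoidAlgebra ℂ (ℕ × ℤ)

/-- The monomial `rⁿ sᵐ` in `ℂ[r, s, s⁻¹]`. -/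
noncomputable def mono (n : ℕ) (m : ℤ) : PolyLaurent :=
  AddMonoidAlgebra.single (n, m) 1

/-- The coordinate ring `B` of the cubic ruled surface `z³ = x y²`: the
subalgebra of `ℂ[r, s, s⁻¹]` generated by `r`, `r·s⁻¹` and `r·s²`. -/
noncomputable def ruledB : Subalgebra ℂ PolyLaurent :=
  Algebra.adjoin ℂ {mono 1 0, mono 1 (-1), mono 1 2}

/-- The partial derivative `∂_r` of `ℂ[r, s, s⁻¹]`, sending `rⁿsᵐ` to
`n·r^{n−1}sᵐ`. -/
noncomputable def dr : PolyLaurent →ₗ[ℂ] PolyLaurent :=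
  (AddMonoidAlgebra.coeffLinearEquiv ℂ).symm.toLinearMap ∘ₗ
    (Finsupp.lsum ℂ fun (p : ℕ × ℤ) => (p.1 : ℂ) • Finsupp.lsingle (R := ℂ) (M := ℂ) (p.1 - 1, p.2)) ∘ₗ
    (AddMonoidAlgebra.coeffLinearEquiv ℂ).toLinearMap

/-- The partial derivative `∂_s` of `ℂ[r, s, s⁻¹]`, sending `rⁿsᵐ` to
`m·rⁿs^{m−1}`. -/
noncomputable def ds : PolyLaurent →ₗ[ℂ] PolyLaurent :=
  (AddMonoidAlgebra.coeffLinearEquiv ℂ).symm.toLinearMap ∘ₗ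
    (Finsupp.lsum ℂ fun (p : ℕ × ℤ) => (p.2 : ℂ) • Finsupp.lsingle (R := ℂ) (M := ℂ) (p.1, p.2 - 1)) ∘ₗ
    (AddMonoidAlgebra.coeffLinearEquiv ℂ).toLinearMap

/-- The exceptional derivation `D := r²·s⁻²·∂_r + r·s⁻¹·∂_s` of the ruled
surface `z³ = xy²`. -/
noncomputable def Dop : PolyLaurent →ₗ[ℂ] PolyLaurent :=
  (LinearMap.mulLeft ℂ (mono 2 (-2))) ∘ₗ dr + (LinearMap.mulLeft ℂ (mono 1 (-1))) ∘ₗ ds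

/-! On monomials `D(rⁿsᵐ) = (n + m)·r^{n+1}s^{m−2}`, and the weight `n + m` is additive under
multiplication, so `D` satisfies the Leibniz rule. A derivation preserves the subalgebra generated
by a set once it maps the generators into it, and here `D r = (r s⁻¹)²`, `D (r s⁻¹) = 0` and
`D (r s²) = 3 r²`. -/

theorem Derivation.map_mem_adjoin {R A : Type*} [CommSemiring R] [CommSemiring A] [Algebra R A]
    (D : Derivation R A A) {s : Set A} (hs : ∀ x ∈ s, D x ∈ Algebra.adjoin R s)
    {x : A} (hx : x ∈ Algebra.adjoin R s) : D x ∈ Algebra.adjoin R s := by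
  induction hx using Algebra.adjoin_induction with
  | mem x hx => exact hs x hx
  | algebraMap r => simp
  | add x y _ _ hx hy => simpa using add_mem hx hy
  | mul x y hx' hy' hx hy =>
    rw [Derivation.leibniz, smul_eq_mul, smul_eq_mul]
    exact add_mem (mul_mem hx' hy) (mul_mem hy' hx)

theorem AddMonoidAlgebra.leibniz_of_single {k G M : Type*} [CommSemiring k] [AddCommMonoid G]
    [AddCommMonoid M] [Module k M] [Module (AddMonoidAlgebra k G) M]
    [IsScalarTower k (AddMonoidAlgebra k G) M] (f : AddMonoidAlgebra k G →ₗ[k] M)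
    (h : ∀ a b : G, f (single a 1 * single b 1) =
      single a (1 : k) • f (single b 1) + single b (1 : k) • f (single a 1))
    (x y : AddMonoidAlgebra k G) : f (x * y) = x • f y + y • f x := by
  induction x using AddMonoidAlgebra.induction_linear with
  | zero => simp
  | add x x' hx hx' => simp only [add_mul, map_add, hx, hx', add_smul, smul_add]; abel
  | single a c =>
    induction y using AddMonoidAlgebra.induction_linear with
    | zero => simp
    | add y y' hy hy' => simp only [mul_add, map_add, hy, hy', add_smul, smul_add]; abel
    | single b d =>
      have hc : single a c = c • single a (1 : k) := by simp
      have hd : single b d = d • single b (1 : k) := by simp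
      rw [hc, hd, smul_mul_smul_comm, map_smul, h, map_smul, map_smul]
      simp only [smul_add, smul_assoc]
      rw [smul_comm (single a (1 : k)) d, smul_comm (single b (1 : k)) c, smul_smul, smul_smul,
        mul_comm d c]

theorem mono_mul (n n' : ℕ) (m m' : ℤ) : mono n m * mono n' m' = mono (n + n') (m + m') := by
  simp [mono, AddMonoidAlgebra.single_mul_single]

theorem dr_mono (n : ℕ) (m : ℤ) : dr (mono n m) = (n : ℂ) • mono (n - 1) m := by
  simp [dr, mono, AddMonoidAlgebra.coeffLinearEquiv_apply,
    AddMonoidAlgebra.coeffLinearEquiv_symm_apply]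

theorem ds_mono (n : ℕ) (m : ℤ) : ds (mono n m) = (m : ℂ) • mono n (m - 1) := by
  simp [ds, mono, AddMonoidAlgebra.coeffLinearEquiv_apply,
    AddMonoidAlgebra.coeffLinearEquiv_symm_apply]

theorem Dop_mono (n : ℕ) (m : ℤ) : Dop (mono n m) = ((n : ℂ) + m) • mono (n + 1) (m - 2) := by
  simp only [Dop, LinearMap.add_apply, LinearMap.comp_apply, LinearMap.mulLeft_apply, dr_mono,
    ds_mono, mul_smul_comm, mono_mul, add_smul]
  rcases n with _ | n
  · simp only [CharP.cast_eq_zero, zero_smul, zero_add]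
    congr 2; ring
  · congr 3 <;> omega

theorem Dop_mono_mul (a b : ℕ × ℤ) :
    Dop (mono a.1 a.2 * mono b.1 b.2) =
      mono a.1 a.2 • Dop (mono b.1 b.2) + mono b.1 b.2 • Dop (mono a.1 a.2) := by
  simp only [mono_mul, Dop_mono, smul_eq_mul, mul_smul_comm, Nat.cast_add, Int.cast_add]
  ring_nf
  module

noncomputable def derivationDop : Derivation ℂ PolyLaurent PolyLaurent :=
  Derivation.mk' Dop (AddMonoidAlgebra.leibniz_of_single Dop Dop_mono_mul)

theorem Dop_mem_ruledB_of_mem_generators {x : PolyLaurent}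
    (hx : x ∈ ({mono 1 0, mono 1 (-1), mono 1 2} : Set PolyLaurent)) :
    Dop x ∈ ruledB := by
  have hr : mono 1 0 ∈ ruledB := Algebra.subset_adjoin (by simp)
  have hrs : mono 1 (-1) ∈ ruledB := Algebra.subset_adjoin (by simp)
  rcases hx with rfl | rfl | rfl
  · simpa [Dop_mono, mono_mul] using mul_mem hrs hrs
  · simp [Dop_mono]
  · norm_num [Dop_mono, mono_mul]
    simpa [mono_mul] using Subalgebra.smul_mem _ (mul_mem hr hr) (3 : ℂ)

/-- **The exceptional derivation of the ruled surface (part 3 of the Lemma on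
derivations of the ruled surface `z³ = xy²`).**
The derivation `D = r²·s⁻²·∂_r + r·s⁻¹·∂_s` of `ℂ[r, s, s⁻¹]` maps `B` into
`B`, i.e. it restricts to a derivation of the coordinate ring of the ruled
surface; explicitly, `D(rⁿsᵐ) = (n + m)·r^{n+1}s^{m−2}`. -/
theorem ruled_surface_derivation_D :
    (∀ b ∈ ruledB, Dop b ∈ ruledB) ∧
    (∀ (n : ℕ) (m : ℤ),
      Dop (mono n m) = ((n : ℂ) + (m : ℂ)) • mono (n + 1) (m - 2)) := by
  refine ⟨fun b hb => ?_, Dop_mono⟩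
  exact derivationDop.map_mem_adjoin (fun _ hx => Dop_mem_ruledB_of_mem_generators hx) hb
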